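/- arXiv:1007.4342 — 2 statements merged into one kernel-verified Lean document; each statement's English description precedes it below -/
import Mathlib

section
/- Let λ be a simple smooth eigenvalue family of the symmetric matrix pencil M(τ,ξ) = τ + Σ_j ξ_j A_j (A_j symmetric), with associated smooth spectral projector P(τ(ξ),ξ) and partial inverse M^{−1}(τ(ξ),ξ) defined on the range of 1−P. Then for all j,k, (∂²τ/∂ξ_j∂ξ_k)(ξ) P = P A_j M^{−1} A_k P + P A_k M^{−1} A_j P, all operators evaluated at (τ(ξ),ξ). -/
attribute [local instance] Matrix.normedAddCommGroup Matrix.normedSpace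

namespace Stmt11Aux

lemma isBBM_mul (n : ℕ) :
    IsBoundedBilinearMap ℝ (fun p : Matrix (Fin n) (Fin n) ℝ × Matrix (Fin n) (Fin n) ℝ =>
      p.1 * p.2) where
  add_left _ _ _ := add_mul _ _ _
  smul_left c x y := smul_mul_assoc c x y
  add_right _ _ _ := mul_add _ _ _
  smul_right c x y := mul_smul_comm c x y
  bound := by
    refine ⟨(n : ℝ) + 1, by positivity, fun x y => ?_⟩
    rw [Matrix.norm_le_iff (by positivity)]
    intro i j
    calc ‖(x * y) i j‖ = ‖∑ l, x i l * y l j‖ := rfl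
      _ ≤ ∑ l, ‖x i l * y l j‖ := norm_sum_le _ _
      _ ≤ ∑ _l : Fin n, ‖x‖ * ‖y‖ := by
          refine Finset.sum_le_sum fun l _ => ?_
          rw [norm_mul]
          exact mul_le_mul (Matrix.norm_entry_le_entrywise_sup_norm x)
            (Matrix.norm_entry_le_entrywise_sup_norm y) (norm_nonneg _) (norm_nonneg _)
      _ = (n : ℝ) * (‖x‖ * ‖y‖) := by simp [Finset.sum_const, mul_assoc]
      _ ≤ ((n : ℝ) + 1) * ‖x‖ * ‖y‖ := by
          rw [mul_assoc]
          exact mul_le_mul_of_nonneg_right (by linarith) (by positivity)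

variable {E : Type*} [NormedAddCommGroup E] [NormedSpace ℝ E] {n : ℕ}
  {f g : E → Matrix (Fin n) (Fin n) ℝ} {x : E}

lemma _root_.DifferentiableAt.matmul (hf : DifferentiableAt ℝ f x) (hg : DifferentiableAt ℝ g x) :
    DifferentiableAt ℝ (fun ξ => f ξ * g ξ) x := by
  have h := ((isBBM_mul n).hasFDerivAt (f x, g x)).comp x
    (HasFDerivAt.prodMk hf.hasFDerivAt hg.hasFDerivAt)
  exact h.differentiableAt

lemma fderiv_matmul_apply (hf : DifferentiableAt ℝ f x) (hg : DifferentiableAt ℝ g x) (v : E) :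
    fderiv ℝ (fun ξ => f ξ * g ξ) x v
      = fderiv ℝ f x v * g x + f x * fderiv ℝ g x v := by
  have h := ((isBBM_mul n).hasFDerivAt (f x, g x)).comp x
    (HasFDerivAt.prodMk hf.hasFDerivAt hg.hasFDerivAt)
  have h' : HasFDerivAt (fun ξ => f ξ * g ξ)
      (((isBBM_mul n).deriv (f x, g x)).comp ((fderiv ℝ f x).prod (fderiv ℝ g x))) x := h
  rw [show fderiv ℝ (fun ξ => f ξ * g ξ) x = _ from h'.fderiv]
  show (isBBM_mul n).deriv (f x, g x) (fderiv ℝ f x v, fderiv ℝ g x v) = _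
  rw [IsBoundedBilinearMap.deriv_apply]
  exact add_comm _ _

lemma key_algebra {R : Type*} [Ring R] [Algebra ℝ R]
    (Q N Mm Aj Ak dQ : R) (tj tk c : ℝ)
    (hQ : Q * Q = Q)
    (hN1 : N * Mm = 1 - Q) (hN2 : Mm * N = 1 - Q)
    (hN3 : Q * N = 0) (hN4 : N * Q = 0)
    (he1 : (tj • (1 : R) + Aj) * Q + Mm * dQ = 0)
    (he2 : dQ * Mm + Q * (tj • (1 : R) + Aj) = 0)
    (he3 : dQ * Q + Q * dQ = dQ)
    (hsum : c • Q + (tk • dQ + (dQ * (Ak * Q) + Q * (Ak * dQ))) = 0) :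
    c • Q = Q * Aj * N * Ak * Q + Q * Ak * N * Aj * Q := by
  have hQ' : ∀ X : R, Q * (Q * X) = Q * X := fun X => by rw [← mul_assoc, hQ]
  -- b0
  have b0 : Q * (dQ * Q) = 0 := by
    have h := congrArg (fun X => Q * X) he3
    simp only [mul_add, hQ'] at h
    exact add_eq_right.mp h
  -- b1
  have b1 : dQ * Q = -(N * (Aj * Q)) := by
    have h1 : Mm * dQ = -(tj • Q + Aj * Q) := by
      have := he1
      rw [add_mul, smul_mul_assoc, one_mul] at this
      exact eq_neg_of_add_eq_zero_right this
    have h2 : (1 - Q) * dQ = N * (Mm * dQ) := by rw [← mul_assoc, hN1]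
    rw [h1] at h2
    simp only [mul_neg, mul_add, mul_smul_comm, hN4, smul_zero, zero_add, neg_zero,
      sub_mul, one_mul] at h2
    -- h2 : dQ - Q * dQ = -(N * (Aj * Q))
    have h3 := congrArg (fun X => X * Q) h2
    simp only [sub_mul, neg_mul, mul_assoc, hQ, b0] at h3
    -- h3 : dQ * Q - 0 = -(N * (Aj * Q))
    rw [sub_zero] at h3
    exact h3
  -- b2
  have b2 : Q * dQ = -(Q * (Aj * N)) := by
    have h1 : dQ * Mm = -(tj • Q + Q * Aj) := by
      have := he2
      rw [mul_add, mul_smul_comm, mul_one] at this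
      exact eq_neg_of_add_eq_zero_left this
    have h2 : dQ * (1 - Q) = (dQ * Mm) * N := by rw [mul_assoc, hN2]
    rw [h1] at h2
    simp only [neg_mul, add_mul, smul_mul_assoc, hN3, smul_zero, zero_add,
      mul_sub, mul_one, mul_assoc] at h2
    -- h2 : dQ - dQ * Q = -(Q * (Aj * N))
    have h3 := congrArg (fun X => Q * X) h2
    simp only [mul_sub, mul_neg, b0, sub_zero, hQ'] at h3
    exact h3
  have b0' : Q * (dQ * Q) = 0 := b0
  have b2' : ∀ X : R, Q * (dQ * X) = -(Q * (Aj * (N * X))) := fun X => by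
    rw [← mul_assoc, b2, neg_mul, mul_assoc, mul_assoc]
  have hN3' : ∀ X : R, Q * (N * X) = 0 := fun X => by rw [← mul_assoc, hN3, zero_mul]
  have h := congrArg (fun X => Q * X * Q) hsum
  simp only [mul_add, add_mul, mul_smul_comm, smul_mul_assoc, mul_assoc, hQ, hQ', hN3',
    b0', b1, b2', mul_neg, neg_mul, neg_zero, smul_zero, mul_zero, zero_mul, add_zero,
    zero_add] at h
  have h' := eq_neg_of_add_eq_zero_left h
  rw [neg_add, neg_neg, neg_neg] at h'
  rw [h']
  simp only [mul_assoc]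

end Stmt11Aux

/-- Hessian identity for a smooth eigenvalue branch `τ` of the symmetric pencil
`M(τ,ξ) = τ·Id + Σ_j ξ_j A_j`, with associated smooth spectral projector `P` (orthogonal
projector onto `ker M(τ(ξ),ξ)`) and partial inverse `M⁻¹` on the range of `1 − P`:
`(∂²τ/∂ξ_j∂ξ_k) P = P A_j M⁻¹ A_k P + P A_k M⁻¹ A_j P`. -/
theorem stmt_11 (n m : ℕ) (A : Fin m → Matrix (Fin n) (Fin n) ℝ)
    (hA : ∀ j, (A j).IsSymm)
    (U : Set (Fin m → ℝ)) (hU : IsOpen U)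
    (τ : (Fin m → ℝ) → ℝ) (P Minv : (Fin m → ℝ) → Matrix (Fin n) (Fin n) ℝ)
    (hτ : ContDiffOn ℝ (⊤ : ℕ∞) τ U) (hP : ContDiffOn ℝ (⊤ : ℕ∞) P U) (hMinv : ContDiffOn ℝ (⊤ : ℕ∞) Minv U)
    (hPsymm : ∀ ξ ∈ U, (P ξ).IsSymm)
    (hPidem : ∀ ξ ∈ U, P ξ * P ξ = P ξ)
    (hker : ∀ ξ ∈ U,
      (τ ξ • (1 : Matrix (Fin n) (Fin n) ℝ) + ∑ j, ξ j • A j) * P ξ = 0)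
    (hinv1 : ∀ ξ ∈ U,
      Minv ξ * (τ ξ • (1 : Matrix (Fin n) (Fin n) ℝ) + ∑ j, ξ j • A j) = 1 - P ξ)
    (hinv2 : ∀ ξ ∈ U,
      (τ ξ • (1 : Matrix (Fin n) (Fin n) ℝ) + ∑ j, ξ j • A j) * Minv ξ = 1 - P ξ)
    (hinv3 : ∀ ξ ∈ U, P ξ * Minv ξ = 0)
    (hinv4 : ∀ ξ ∈ U, Minv ξ * P ξ = 0)
    (ξ₀ : Fin m → ℝ) (hξ₀ : ξ₀ ∈ U) (j k : Fin m) :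
    (fderiv ℝ (fun ξ => fderiv ℝ τ ξ (Pi.single k (1 : ℝ))) ξ₀ (Pi.single j (1 : ℝ))) •
        P ξ₀ =
      P ξ₀ * A j * Minv ξ₀ * A k * P ξ₀ + P ξ₀ * A k * Minv ξ₀ * A j * P ξ₀ := by
  classical
  let Mf : (Fin m → ℝ) → Matrix (Fin n) (Fin n) ℝ := fun ξ => τ ξ • (1 : Matrix (Fin n) (Fin n) ℝ) + ∑ i, ξ i • A i
  -- basic differentiability
  have hτd : ∀ ξ ∈ U, DifferentiableAt ℝ τ ξ := fun ξ hξ =>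
    ((hτ.differentiableOn (by simp)).differentiableAt (hU.mem_nhds hξ))
  have hPd : ∀ ξ ∈ U, DifferentiableAt ℝ P ξ := fun ξ hξ =>
    ((hP.differentiableOn (by simp)).differentiableAt (hU.mem_nhds hξ))
  have hMhas : ∀ ξ ∈ U, HasFDerivAt Mf
      ((fderiv ℝ τ ξ).smulRight (1 : Matrix (Fin n) (Fin n) ℝ)
        + ∑ i, (ContinuousLinearMap.proj (R := ℝ) (φ := fun _ : Fin m => ℝ) i).smulRight (A i))
      ξ := by
    intro ξ hξ
    exact ((hτd ξ hξ).hasFDerivAt.smul_const (1 : Matrix (Fin n) (Fin n) ℝ)).add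
      (HasFDerivAt.fun_sum fun i _ =>
        (ContinuousLinearMap.proj (R := ℝ) (φ := fun _ : Fin m => ℝ) i).hasFDerivAt.smul_const
          (A i))
  have hMd : ∀ ξ ∈ U, DifferentiableAt ℝ Mf ξ := fun ξ hξ => (hMhas ξ hξ).differentiableAt
  have hMfderiv : ∀ ξ ∈ U, ∀ v, fderiv ℝ Mf ξ v
      = fderiv ℝ τ ξ v • (1 : Matrix (Fin n) (Fin n) ℝ) + ∑ i, v i • A i := by
    intro ξ hξ v
    rw [(hMhas ξ hξ).fderiv]
    simp
  -- derivative of an identically-zero function on U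
  have zeroDeriv : ∀ (F : (Fin m → ℝ) → Matrix (Fin n) (Fin n) ℝ), (∀ ξ ∈ U, F ξ = 0) →
      ∀ ξ ∈ U, fderiv ℝ F ξ = 0 := by
    intro F hF ξ hξ
    have h : F =ᶠ[nhds ξ] fun _ => (0 : Matrix (Fin n) (Fin n) ℝ) :=
      Filter.eventuallyEq_of_mem (hU.mem_nhds hξ) hF
    rw [h.fderiv_eq, fderiv_fun_const]
    rfl
  -- symmetry facts
  have hMsymm : ∀ ξ, (Mf ξ).transpose = Mf ξ := by
    intro ξ
    simp [Mf, Matrix.transpose_add, Matrix.transpose_smul, Matrix.transpose_sum,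
      fun i => (hA i).eq]
  have hPM : ∀ ξ ∈ U, P ξ * Mf ξ = 0 := by
    intro ξ hξ
    have h1 : (P ξ * Mf ξ).transpose = 0 := by
      rw [Matrix.transpose_mul, hMsymm, (hPsymm ξ hξ).eq]
      exact hker ξ hξ
    calc P ξ * Mf ξ = ((P ξ * Mf ξ).transpose).transpose := (Matrix.transpose_transpose _).symm
      _ = 0 := by rw [h1, Matrix.transpose_zero]
  have hMP : ∀ ξ ∈ U, Mf ξ * P ξ = 0 := fun ξ hξ => hker ξ hξ
  have hNM : ∀ ξ ∈ U, Minv ξ * Mf ξ = 1 - P ξ := fun ξ hξ => hinv1 ξ hξ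
  have hMN : ∀ ξ ∈ U, Mf ξ * Minv ξ = 1 - P ξ := fun ξ hξ => hinv2 ξ hξ
  -- single-vector sum
  have Avsingle : ∀ (i₀ : Fin m), (∑ i, (Pi.single i₀ (1:ℝ) : Fin m → ℝ) i • A i) = A i₀ := by
    intro i₀
    rw [Finset.sum_eq_single i₀]
    · simp
    · intro b _ hb
      simp [Pi.single_eq_of_ne hb]
    · simp
  -- first derivative of M*P = 0
  have e1 : ∀ ξ ∈ U, ∀ v, (fderiv ℝ τ ξ v • (1 : Matrix (Fin n) (Fin n) ℝ) + ∑ i, v i • A i) * P ξ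
      + Mf ξ * fderiv ℝ P ξ v = 0 := by
    intro ξ hξ v
    have h0 := zeroDeriv (fun ζ => Mf ζ * P ζ) (fun ζ hζ => hMP ζ hζ) ξ hξ
    have h1 : fderiv ℝ (fun ζ => Mf ζ * P ζ) ξ v = 0 := by rw [h0]; rfl
    rw [Stmt11Aux.fderiv_matmul_apply (hMd ξ hξ) (hPd ξ hξ), hMfderiv ξ hξ] at h1
    exact h1
  -- first derivative of P*M = 0
  have e2 : ∀ ξ ∈ U, ∀ v, fderiv ℝ P ξ v * Mf ξ
      + P ξ * (fderiv ℝ τ ξ v • (1 : Matrix (Fin n) (Fin n) ℝ) + ∑ i, v i • A i) = 0 := by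
    intro ξ hξ v
    have h0 := zeroDeriv (fun ζ => P ζ * Mf ζ) (fun ζ hζ => hPM ζ hζ) ξ hξ
    have h1 : fderiv ℝ (fun ζ => P ζ * Mf ζ) ξ v = 0 := by rw [h0]; rfl
    rw [Stmt11Aux.fderiv_matmul_apply (hPd ξ hξ) (hMd ξ hξ), hMfderiv ξ hξ] at h1
    exact h1
  -- first derivative of P*P = P
  have e3 : ∀ ξ ∈ U, ∀ v, fderiv ℝ P ξ v * P ξ + P ξ * fderiv ℝ P ξ v
      = fderiv ℝ P ξ v := by
    intro ξ hξ v
    have h0 := zeroDeriv (fun ζ => P ζ * P ζ - P ζ)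
      (fun ζ hζ => by show P ζ * P ζ - P ζ = 0; rw [hPidem ζ hζ, sub_self]) ξ hξ
    have h1 : fderiv ℝ (fun ζ => P ζ * P ζ - P ζ) ξ v = 0 := by rw [h0]; rfl
    rw [show fderiv ℝ (fun ζ => P ζ * P ζ - P ζ) ξ = fderiv ℝ (fun ζ => P ζ * P ζ) ξ - fderiv ℝ P ξ from
      fderiv_fun_sub ((hPd ξ hξ).matmul (hPd ξ hξ)) (hPd ξ hξ)] at h1
    simp only [ContinuousLinearMap.sub_apply] at h1
    rw [Stmt11Aux.fderiv_matmul_apply (hPd ξ hξ) (hPd ξ hξ)] at h1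
    exact sub_eq_zero.mp h1
  -- first-order eigenvalue identity on U
  have b3 : ∀ ξ ∈ U, ∀ v, fderiv ℝ τ ξ v • P ξ + P ξ * ((∑ i, v i • A i) * P ξ) = 0 := by
    intro ξ hξ v
    have hQM' : ∀ X : Matrix (Fin n) (Fin n) ℝ, P ξ * (Mf ξ * X) = 0 := fun X => by
      rw [← mul_assoc, hPM ξ hξ, zero_mul]
    have h := congrArg (fun X => P ξ * X) (e1 ξ hξ v)
    simp only [mul_add, add_mul, smul_mul_assoc, one_mul, mul_smul_comm, hQM',
      hPidem ξ hξ, mul_zero, add_zero, ← mul_assoc] at h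
    rw [← mul_assoc]
    exact h
  -- differentiability of the first derivative of τ
  have hτk_diff : DifferentiableAt ℝ (fun ξ => fderiv ℝ τ ξ (Pi.single k (1:ℝ))) ξ₀ := by
    have h1 : ContDiffOn ℝ (⊤ : ℕ∞) (fun ξ => fderiv ℝ τ ξ) U := hτ.fderiv_of_isOpen hU (by simp)
    have h2 : ContDiffOn ℝ (⊤ : ℕ∞) (fun ξ => fderiv ℝ τ ξ (Pi.single k (1:ℝ))) U :=
      h1.clm_apply contDiffOn_const
    exact (h2.differentiableOn (by simp)).differentiableAt (hU.mem_nhds hξ₀)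
  have hd1 : DifferentiableAt ℝ (fun ξ => A k * P ξ) ξ₀ :=
    (differentiableAt_const (A k)).matmul (hPd ξ₀ hξ₀)
  have hd2 : DifferentiableAt ℝ (fun ξ => P ξ * (A k * P ξ)) ξ₀ :=
    (hPd ξ₀ hξ₀).matmul hd1
  have hd3 : DifferentiableAt ℝ
      (fun ξ => fderiv ℝ τ ξ (Pi.single k (1:ℝ)) • P ξ) ξ₀ :=
    hτk_diff.smul (hPd ξ₀ hξ₀)
  -- the first-order identity as a function vanishing on U
  have hg0 : ∀ ξ ∈ U,
      (fun ξ => fderiv ℝ τ ξ (Pi.single k (1:ℝ)) • P ξ + P ξ * (A k * P ξ)) ξ = 0 := by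
    intro ξ hξ
    have h := b3 ξ hξ (Pi.single k (1:ℝ))
    rw [Avsingle] at h
    exact h
  have hdg := zeroDeriv _ hg0 ξ₀ hξ₀
  have hdgv : fderiv ℝ
      (fun ξ => fderiv ℝ τ ξ (Pi.single k (1:ℝ)) • P ξ + P ξ * (A k * P ξ)) ξ₀
      (Pi.single j (1:ℝ)) = 0 := by rw [hdg]; rfl
  have hsplit : fderiv ℝ
      (fun ξ => fderiv ℝ τ ξ (Pi.single k (1:ℝ)) • P ξ + P ξ * (A k * P ξ)) ξ₀
      (Pi.single j (1:ℝ))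
      = fderiv ℝ (fun ξ => fderiv ℝ τ ξ (Pi.single k (1:ℝ)) • P ξ) ξ₀ (Pi.single j (1:ℝ))
        + fderiv ℝ (fun ξ => P ξ * (A k * P ξ)) ξ₀ (Pi.single j (1:ℝ)) := by
    rw [show fderiv ℝ (fun ξ => fderiv ℝ τ ξ (Pi.single k (1:ℝ)) • P ξ + P ξ * (A k * P ξ)) ξ₀
      = fderiv ℝ (fun ξ => fderiv ℝ τ ξ (Pi.single k (1:ℝ)) • P ξ) ξ₀
        + fderiv ℝ (fun ξ => P ξ * (A k * P ξ)) ξ₀ from fderiv_fun_add hd3 hd2]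
    rfl
  have h4 : fderiv ℝ (fun ξ => fderiv ℝ τ ξ (Pi.single k (1:ℝ)) • P ξ) ξ₀
      (Pi.single j (1:ℝ))
      = fderiv ℝ τ ξ₀ (Pi.single k (1:ℝ)) • fderiv ℝ P ξ₀ (Pi.single j (1:ℝ))
        + (fderiv ℝ (fun ξ => fderiv ℝ τ ξ (Pi.single k (1:ℝ))) ξ₀ (Pi.single j (1:ℝ)))
          • P ξ₀ := by
    rw [show fderiv ℝ (fun ξ => fderiv ℝ τ ξ (Pi.single k (1:ℝ)) • P ξ) ξ₀
      = fderiv ℝ τ ξ₀ (Pi.single k (1:ℝ)) • fderiv ℝ P ξ₀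
        + (fderiv ℝ (fun ξ => fderiv ℝ τ ξ (Pi.single k (1:ℝ))) ξ₀).smulRight (P ξ₀)
      from fderiv_fun_smul hτk_diff (hPd ξ₀ hξ₀)]
    simp
  have h5 : fderiv ℝ (fun ξ => P ξ * (A k * P ξ)) ξ₀ (Pi.single j (1:ℝ))
      = fderiv ℝ P ξ₀ (Pi.single j (1:ℝ)) * (A k * P ξ₀)
        + P ξ₀ * (A k * fderiv ℝ P ξ₀ (Pi.single j (1:ℝ))) := by
    rw [Stmt11Aux.fderiv_matmul_apply (hPd ξ₀ hξ₀) hd1]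
    congr 1
    rw [Stmt11Aux.fderiv_matmul_apply (differentiableAt_const (A k)) (hPd ξ₀ hξ₀)]
    simp
  have hsum : (fderiv ℝ (fun ξ => fderiv ℝ τ ξ (Pi.single k (1:ℝ))) ξ₀
        (Pi.single j (1:ℝ))) • P ξ₀
      + (fderiv ℝ τ ξ₀ (Pi.single k (1:ℝ)) • fderiv ℝ P ξ₀ (Pi.single j (1:ℝ))
        + (fderiv ℝ P ξ₀ (Pi.single j (1:ℝ)) * (A k * P ξ₀)
          + P ξ₀ * (A k * fderiv ℝ P ξ₀ (Pi.single j (1:ℝ))))) = 0 := by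
    rw [← hdgv, hsplit, h4, h5]
    abel
  have he1' : (fderiv ℝ τ ξ₀ (Pi.single j (1:ℝ)) • (1 : Matrix (Fin n) (Fin n) ℝ) + A j)
      * P ξ₀ + Mf ξ₀ * fderiv ℝ P ξ₀ (Pi.single j (1:ℝ)) = 0 := by
    have h := e1 ξ₀ hξ₀ (Pi.single j (1:ℝ))
    rw [Avsingle] at h
    exact h
  have he2' : fderiv ℝ P ξ₀ (Pi.single j (1:ℝ)) * Mf ξ₀
      + P ξ₀ * (fderiv ℝ τ ξ₀ (Pi.single j (1:ℝ)) • (1 : Matrix (Fin n) (Fin n) ℝ) + A j)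
      = 0 := by
    have h := e2 ξ₀ hξ₀ (Pi.single j (1:ℝ))
    rw [Avsingle] at h
    exact h
  exact Stmt11Aux.key_algebra (P ξ₀) (Minv ξ₀) (Mf ξ₀) (A j) (A k)
    (fderiv ℝ P ξ₀ (Pi.single j (1:ℝ)))
    (fderiv ℝ τ ξ₀ (Pi.single j (1:ℝ)))
    (fderiv ℝ τ ξ₀ (Pi.single k (1:ℝ)))
    (fderiv ℝ (fun ξ => fderiv ℝ τ ξ (Pi.single k (1:ℝ))) ξ₀ (Pi.single j (1:ℝ)))
    (hPidem ξ₀ hξ₀) (hNM ξ₀ hξ₀) (hMN ξ₀ hξ₀) (hinv3 ξ₀ hξ₀) (hinv4 ξ₀ hξ₀)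
    he1' he2' (e3 ξ₀ hξ₀ (Pi.single j (1:ℝ))) hsum
end

section
/- Let H be a Banach space and f ∈ C(R_+, H) with Gf := lim_{S→∞} (1/S)∫₀^S e^{isλ(D)} f(T+s) ds = 0 uniformly in T, where e^{isλ(D)} is a strongly continuous group of isometries. Then any mild solution u of (∂_T + iλ(D))u = f, i.e. u(T) = e^{−iTλ(D)}u(0) + ∫₀^T e^{−i(T−s)λ(D)}f(s)ds, is sublinear: ‖u(T)‖/T → 0 as T → +∞. -/
open MeasureTheory

/-- Property (ii) of the Lannes averaging operators: if the averages of the source `f` along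
the characteristics, `(1/S) ∫₀^S e^{isλ(D)} f(T+s) ds`, tend to `0` uniformly in `T`
(where `U s = e^{isλ(D)}` is a strongly continuous group of isometries on a Banach
space `H`), then any mild solution `u` of `(∂_T + iλ(D)) u = f`, i.e.
`u(T) = e^{−iTλ(D)} u(0) + ∫₀^T e^{−i(T−s)λ(D)} f(s) ds`, is sublinear:
`‖u(T)‖/T → 0` as `T → ∞`. -/
theorem stmt_13 {H : Type*} [NormedAddCommGroup H] [NormedSpace ℝ H] [CompleteSpace H]
    (U : ℝ → H →L[ℝ] H)
    (hgroup0 : U 0 = ContinuousLinearMap.id ℝ H)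
    (hgroup : ∀ s t : ℝ, U (s + t) = (U s).comp (U t))
    (hiso : ∀ (s : ℝ) (x : H), ‖U s x‖ = ‖x‖)
    (hcont : ∀ x : H, Continuous fun s => U s x)
    (f : ℝ → H) (hf : Continuous f)
    (havg : ∀ ε > (0:ℝ), ∃ S₀ > (0:ℝ), ∀ S ≥ S₀, ∀ T ≥ (0:ℝ),
      ‖(S⁻¹ : ℝ) • ∫ s in (0:ℝ)..S, U s (f (T + s))‖ ≤ ε)
    (u : ℝ → H)
    (hmild : ∀ T : ℝ, u T = U (-T) (u 0) + ∫ s in (0:ℝ)..T, U (s - T) (f s)) :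
    Filter.Tendsto (fun T => ‖u T‖ / T) Filter.atTop (nhds 0) := by
  -- continuity of s ↦ U s (f s)
  have hc : Continuous fun s => U s (f s) := by
    rw [continuous_iff_continuousAt]
    intro t
    have h1 : Filter.Tendsto (fun s => U s (f s) - U s (f t)) (nhds t) (nhds 0) := by
      refine squeeze_zero_norm (a := fun s => ‖f s - f t‖) (fun s => ?_) ?_
      · rw [← map_sub, hiso]
      · have : Filter.Tendsto (fun s => f s - f t) (nhds t) (nhds (f t - f t)) :=
          (hf.tendsto t).sub tendsto_const_nhds
        simpa [tendsto_zero_iff_norm_tendsto_zero] using this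
    have h2 : Filter.Tendsto (fun s => U s (f t)) (nhds t) (nhds (U t (f t))) :=
      (hcont (f t)).tendsto t
    have := h1.add h2
    simpa [ContinuousAt] using this
  have hint : ∀ T : ℝ, IntervalIntegrable (fun s => U s (f s)) volume 0 T :=
    fun T => hc.intervalIntegrable 0 T
  -- rewrite the integral in the mild formula
  have key : ∀ T : ℝ, ‖u T‖ ≤ ‖u 0‖ + ‖∫ s in (0:ℝ)..T, U s (f s)‖ := by
    intro T
    have heq : (∫ s in (0:ℝ)..T, U (s - T) (f s))
        = U (-T) (∫ s in (0:ℝ)..T, U s (f s)) := by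
      rw [← ContinuousLinearMap.intervalIntegral_comp_comm _ (hint T)]
      apply intervalIntegral.integral_congr
      intro s _
      have : U (s - T) = (U (-T)).comp (U s) := by
        rw [← hgroup]; ring_nf
      simp [this]
    calc ‖u T‖ = ‖U (-T) (u 0 + ∫ s in (0:ℝ)..T, U s (f s))‖ := by
          rw [hmild T, heq, map_add]
      _ = ‖u 0 + ∫ s in (0:ℝ)..T, U s (f s)‖ := hiso _ _
      _ ≤ ‖u 0‖ + ‖∫ s in (0:ℝ)..T, U s (f s)‖ := norm_add_le _ _
  rw [Metric.tendsto_atTop]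
  intro ε hε
  obtain ⟨S₀, hS₀pos, hS₀⟩ := havg (ε / 4) (by linarith)
  refine ⟨max S₀ (max 1 (4 * ‖u 0‖ / ε)), fun T hT => ?_⟩
  have hTS₀ : T ≥ S₀ := le_trans (le_max_left _ _) hT
  have hT1 : (1:ℝ) ≤ T := le_trans (le_trans (le_max_left _ _) (le_max_right _ _)) hT
  have hTu : 4 * ‖u 0‖ / ε ≤ T := le_trans (le_trans (le_max_right _ _) (le_max_right _ _)) hT
  have hTpos : 0 < T := lt_of_lt_of_le one_pos hT1
  have h3 := hS₀ T hTS₀ 0 le_rfl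
  simp only [zero_add] at h3
  rw [norm_smul, Real.norm_eq_abs, abs_inv, abs_of_pos hTpos] at h3
  have hgT : ‖∫ s in (0:ℝ)..T, U s (f s)‖ ≤ ε / 4 * T := by
    have := (div_le_iff₀ hTpos).mp (by simpa [inv_mul_eq_div] using h3)
    linarith [this]
  have hu0 : ‖u 0‖ ≤ ε / 4 * T := by
    have : 4 * ‖u 0‖ ≤ ε * T := by
      rw [div_le_iff₀ hε] at hTu; linarith [hTu]
    linarith
  rw [Real.dist_eq, sub_zero, abs_of_nonneg (by positivity)]
  rw [div_lt_iff₀ hTpos]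
  calc ‖u T‖ ≤ ‖u 0‖ + ‖∫ s in (0:ℝ)..T, U s (f s)‖ := key T
    _ ≤ ε / 4 * T + ε / 4 * T := add_le_add hu0 hgT
    _ < ε * T := by nlinarith
end
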